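/- Let H be a Hopf algebra over a field k with antipode S, M an H-tetramodule, and f : M → H an H-bimodule map which is a coderivation. Then the restriction f̃ of f to the left-invariants ⁱⁿᵛM := {m ∈ M : m₍₋₁₎ ⊗ m₍₀₎ = 1 ⊗ m} takes values in ker ε and is equivariant for the right adjoint actions: f̃(S(h₍₁₎) m h₍₂₎) = S(h₍₁₎) f̃(m) h₍₂₎ for all m ∈ ⁱⁿᵛM and h ∈ H; together with the right-colinearity of f̃ (with respect to the right coaction of M on ⁱⁿᵛM and the coaction Δ̃(h) = h₍₁₎ ⊗ h₍₂₎ − 1 ⊗ h on ker ε) this makes f̃ : ⁱⁿᵛM → ker ε a morphism of Yetter–Drinfel'd modules over H. -/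

import Mathlib

open TensorProduct LinearMap

section Defs

variable (k H M : Type) [Field k] [Ring H] [HopfAlgebra k H]
  [AddCommGroup M] [Module k M]

/-- The right adjoint action `m ⊗ h ↦ S(h₍₁₎) m h₍₂₎` on an `H`-bimodule `M` with
left action `lact` and right action `ract`. -/
noncomputable def adActM (lact : H ⊗[k] M →ₗ[k] M) (ract : M ⊗[k] H →ₗ[k] M) :
    M ⊗[k] H →ₗ[k] M :=
  ract
  ∘ₗ (rTensor H (lact ∘ₗ (TensorProduct.comm k M H).toLinearMap))
  ∘ₗ (TensorProduct.assoc k M H H).symm.toLinearMap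
  ∘ₗ (lTensor M (rTensor H (HopfAlgebra.antipode (R := k))))
  ∘ₗ (lTensor M (Coalgebra.comul (R := k)))

/-- The right adjoint action `g ⊗ h ↦ S(h₍₁₎) g h₍₂₎` of `H` on itself. -/
noncomputable def adActH : H ⊗[k] H →ₗ[k] H :=
  adActM k H H (LinearMap.mul' k H) (LinearMap.mul' k H)

/-- Diagonal left `H`-action on `H ⊗ M`: `g ⊗ (a ⊗ m) ↦ g₍₁₎a ⊗ g₍₂₎m`. -/
noncomputable def diagLHM (lact : H ⊗[k] M →ₗ[k] M) :
    H ⊗[k] (H ⊗[k] M) →ₗ[k] H ⊗[k] M :=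
  (TensorProduct.map (LinearMap.mul' k H) lact)
  ∘ₗ (TensorProduct.tensorTensorTensorComm k H H H M).toLinearMap
  ∘ₗ (rTensor (H ⊗[k] M) (Coalgebra.comul (R := k)))

/-- Diagonal right `H`-action on `H ⊗ M`: `(a ⊗ m) ⊗ g ↦ ag₍₁₎ ⊗ mg₍₂₎`. -/
noncomputable def diagRHM (ract : M ⊗[k] H →ₗ[k] M) :
    (H ⊗[k] M) ⊗[k] H →ₗ[k] H ⊗[k] M :=
  (TensorProduct.map (LinearMap.mul' k H) ract)
  ∘ₗ (TensorProduct.tensorTensorTensorComm k H M H H).toLinearMap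
  ∘ₗ (lTensor (H ⊗[k] M) (Coalgebra.comul (R := k)))

/-- Diagonal left `H`-action on `M ⊗ H`: `g ⊗ (m ⊗ a) ↦ g₍₁₎m ⊗ g₍₂₎a`. -/
noncomputable def diagLMH (lact : H ⊗[k] M →ₗ[k] M) :
    H ⊗[k] (M ⊗[k] H) →ₗ[k] M ⊗[k] H :=
  (TensorProduct.map lact (LinearMap.mul' k H))
  ∘ₗ (TensorProduct.tensorTensorTensorComm k H H M H).toLinearMap
  ∘ₗ (rTensor (M ⊗[k] H) (Coalgebra.comul (R := k)))

/-- Diagonal right `H`-action on `M ⊗ H`: `(m ⊗ a) ⊗ g ↦ mg₍₁₎ ⊗ ag₍₂₎`. -/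
noncomputable def diagRMH (ract : M ⊗[k] H →ₗ[k] M) :
    (M ⊗[k] H) ⊗[k] H →ₗ[k] M ⊗[k] H :=
  (TensorProduct.map ract (LinearMap.mul' k H))
  ∘ₗ (TensorProduct.tensorTensorTensorComm k M H H H).toLinearMap
  ∘ₗ (lTensor (M ⊗[k] H) (Coalgebra.comul (R := k)))

end Defs

/-!
For a left-invariant `m`, the tetramodule axioms say that `y ⊗ w ↦ y m w` is a map of left
comodules from `H ⊗ H`, coacting diagonally by `y ⊗ w ↦ y₁w₁ ⊗ y₂ ⊗ w₂`, to `M`. The element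
`S(h₁) ⊗ h₂` is coinvariant for this coaction: in the convolution algebra `Hom(H, H ⊗ H)` the map
`Δ ∘ S` is a left inverse of `Δ = ι₁ * ι₂`, which gives `(Δ ∘ S) * ι₁ = ι₂ ∘ S`. Hence
`S(h₁) m h₂` is again left-invariant. Applying `ε ⊗ ε` to the coderivation rule gives
`ε (f m) = 2 ε (f m)`.
-/

open Coalgebra HopfAlgebra WithConv

namespace LinearMap

variable {R A B C : Type*} [CommSemiring R] [Semiring A] [Algebra R A] [Semiring B] [Algebra R B]
  [AddCommMonoid C] [Module R C] [Coalgebra R C]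

lemma algHom_comp_convOne' (g : A →ₐ[R] B) :
    g.toLinearMap ∘ₗ (1 : WithConv (C →ₗ[R] A)).ofConv = (1 : WithConv (C →ₗ[R] B)).ofConv := by
  ext; simp

end LinearMap

namespace HopfAlgebra

variable {R H : Type*} [CommSemiring R] [Semiring H] [HopfAlgebra R H]

open Algebra.TensorProduct (includeLeft includeRight)

local notation "ι₁" => (includeLeft : H →ₐ[R] H ⊗[R] H)
local notation "ι₂" => (includeRight : H →ₐ[R] H ⊗[R] H)
local notation "J" => Algebra.TensorProduct.map (AlgHom.id R H) ι₁
local notation "ι₃" => AlgHom.comp (includeRight : H ⊗[R] H →ₐ[R] H ⊗[R] (H ⊗[R] H)) ι₂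

lemma comul_comp_antipode_convMul_comul :
    toConv (comul ∘ₗ antipode R) * toConv (comul (R := R) (A := H)) = 1 := by
  have h := algHom_comp_convMul_distrib (Bialgebra.comulAlgHom R H) (toConv (antipode R))
    (toConv .id)
  rw [antipode_mul_id, algHom_comp_convOne'] at h
  exact ofConv_injective h.symm

lemma includeLeft_convMul_includeRight :
    toConv (ι₁).toLinearMap * toConv (ι₂).toLinearMap = toConv (comul (R := R) (A := H)) := by
  ext a
  simp [(ℛ R a).convMul_apply, ← (ℛ R a).eq]

lemma comul_convMul_includeRight_comp_antipode :
    toConv (comul (R := R) (A := H)) * toConv ((ι₂).toLinearMap ∘ₗ antipode R) =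
      toConv (ι₁).toLinearMap := by
  have h := algHom_comp_convMul_distrib ι₂ (toConv .id) (toConv (antipode R))
  rw [id_mul_antipode, algHom_comp_convOne', comp_id] at h
  have h' : toConv (ι₂).toLinearMap * toConv ((ι₂).toLinearMap ∘ₗ antipode R) = 1 :=
    ofConv_injective h.symm
  rw [← includeLeft_convMul_includeRight, mul_assoc, h', mul_one]

/-- In Sweedler notation: `Δ(S h₁) (h₂ ⊗ 1) = 1 ⊗ S h`. -/
lemma comul_comp_antipode_convMul_includeLeft :
    toConv (comul ∘ₗ antipode R) * toConv (ι₁).toLinearMap =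
      toConv ((ι₂).toLinearMap ∘ₗ antipode R (A := H)) := by
  rw [← comul_convMul_includeRight_comp_antipode, ← mul_assoc, comul_comp_antipode_convMul_comul,
    one_mul]

variable (R H) in
noncomputable def diagonalCoaction : H ⊗[R] H →ₗ[R] H ⊗[R] (H ⊗[R] H) :=
  rTensor (H ⊗[R] H) (mul' R H) ∘ₗ comul

lemma diagonalCoaction_tmul (y w : H) :
    diagonalCoaction R H (y ⊗ₜ w) =
      (J).toLinearMap (comul y) *
        (toConv ((J).toLinearMap ∘ₗ (ι₁).toLinearMap) * toConv (ι₃).toLinearMap) w := by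
  rw [(ℛ R w).convMul_apply]
  simp [diagonalCoaction, ← (ℛ R y).eq, ← (ℛ R w).eq, Finset.sum_mul, Finset.mul_sum, tmul_sum,
    sum_tmul]

lemma diagonalCoaction_rTensor_antipode_comul (h : H) :
    diagonalCoaction R H (rTensor H (antipode R) (comul h)) =
      1 ⊗ₜ rTensor H (antipode R) (comul h) := by
  have hJ := algHom_comp_convMul_distrib J (toConv (comul ∘ₗ antipode R)) (toConv (ι₁).toLinearMap)
  simp only [ofConv_toConv, comul_comp_antipode_convMul_includeLeft] at hJ
  have key : toConv ((J).toLinearMap ∘ₗ comul ∘ₗ antipode R) *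
      (toConv ((J).toLinearMap ∘ₗ (ι₁).toLinearMap) * toConv (ι₃).toLinearMap) =
      toConv ((J).toLinearMap ∘ₗ (ι₂).toLinearMap ∘ₗ antipode R) * toConv (ι₃).toLinearMap := by
    rw [← mul_assoc, ← toConv_ofConv (toConv _ * toConv _), ← hJ]
  have h_eval := congr($key h)
  rw [(ℛ R h).convMul_apply, (ℛ R h).convMul_apply] at h_eval
  simpa [← (ℛ R h).eq, diagonalCoaction_tmul, tmul_sum] using h_eval

end HopfAlgebra

section Bimodule

variable {k H M : Type} [Field k] [Ring H] [HopfAlgebra k H] [AddCommGroup M] [Module k M]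
  (lact : H ⊗[k] M →ₗ[k] M) (ract : M ⊗[k] H →ₗ[k] M)

noncomputable def sandwich (m : M) : H ⊗[k] H →ₗ[k] M :=
  ract ∘ₗ rTensor H (lact ∘ₗ (TensorProduct.mk k H M).flip m)

@[simp] lemma sandwich_tmul (m : M) (y w : H) :
    sandwich lact ract m (y ⊗ₜ w) = ract (lact (y ⊗ₜ m) ⊗ₜ w) := rfl

lemma adActM_tmul (m : M) (h : H) :
    adActM k H M lact ract (m ⊗ₜ h) = sandwich lact ract m (rTensor H (antipode k) (comul h)) := by
  simp only [adActM, coe_comp, Function.comp_apply, lTensor_tmul]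
  induction rTensor H (antipode k) (comul h) using TensorProduct.induction_on with
  | zero => simp
  | tmul y w => simp
  | add s t hs ht => simp_all [tmul_add]

lemma apply_sandwich (f : M →ₗ[k] H) (h_fl : ∀ (a : H) (m : M), f (lact (a ⊗ₜ m)) = a * f m)
    (h_fr : ∀ (m : M) (a : H), f (ract (m ⊗ₜ a)) = f m * a) (m : M) (t : H ⊗[k] H) :
    f (sandwich lact ract m t) = sandwich (mul' k H) (mul' k H) (f m) t := by
  induction t using TensorProduct.induction_on with
  | zero => simp
  | tmul y w => simp [h_fl, h_fr]
  | add s t hs ht => simp_all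

variable {lact ract} in
lemma lam_sandwich (lam : M →ₗ[k] H ⊗[k] M)
    (hcl_l : lam ∘ₗ lact = diagLHM k H M lact ∘ₗ lTensor H lam)
    (hcl_r : lam ∘ₗ ract = diagRHM k H M ract ∘ₗ rTensor H lam)
    (m : M) (hm : lam m = (1 : H) ⊗ₜ[k] m) (t : H ⊗[k] H) :
    lam (sandwich lact ract m t) = lTensor H (sandwich lact ract m) (diagonalCoaction k H t) := by
  induction t using TensorProduct.induction_on with
  | zero => simp
  | tmul y w =>
    have hl := congr($hcl_l (y ⊗ₜ m))
    have hr := congr($hcl_r (lact (y ⊗ₜ m) ⊗ₜ w))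
    simp only [coe_comp, Function.comp_apply, lTensor_tmul, rTensor_tmul, hm] at hl hr
    rw [sandwich_tmul, hr, hl]
    simpa [diagLHM, diagRHM, diagonalCoaction, ← (ℛ k y).eq, ← (ℛ k w).eq, sum_tmul, tmul_sum]
      using Finset.sum_comm
  | add s t hs ht => simp_all

variable {lact ract} in
lemma lam_adActM_of_lam_eq (lam : M →ₗ[k] H ⊗[k] M)
    (hcl_l : lam ∘ₗ lact = diagLHM k H M lact ∘ₗ lTensor H lam)
    (hcl_r : lam ∘ₗ ract = diagRHM k H M ract ∘ₗ rTensor H lam)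
    (m : M) (hm : lam m = (1 : H) ⊗ₜ[k] m) (h : H) :
    lam (adActM k H M lact ract (m ⊗ₜ h)) = (1 : H) ⊗ₜ[k] adActM k H M lact ract (m ⊗ₜ h) := by
  rw [adActM_tmul, lam_sandwich lam hcl_l hcl_r m hm, diagonalCoaction_rTensor_antipode_comul,
    lTensor_tmul]

lemma apply_adActM (f : M →ₗ[k] H) (h_fl : ∀ (a : H) (m : M), f (lact (a ⊗ₜ m)) = a * f m)
    (h_fr : ∀ (m : M) (a : H), f (ract (m ⊗ₜ a)) = f m * a) (m : M) (h : H) :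
    f (adActM k H M lact ract (m ⊗ₜ h)) = adActH k H (f m ⊗ₜ h) := by
  rw [adActM_tmul, apply_sandwich lact ract f h_fl h_fr, adActH, adActM_tmul]

end Bimodule

section Coderivation

variable {R C M : Type*} [CommRing R] [AddCommMonoid C] [Module R C] [Coalgebra R C]
  [AddCommMonoid M] [Module R M]

lemma counit_apply_eq_zero_of_coderivation (lam : M →ₗ[R] C ⊗[R] M) (ρ : M →ₗ[R] M ⊗[R] C)
    (hl_counit : ∀ m, TensorProduct.lid R M (rTensor M counit (lam m)) = m)
    (hr_counit : ∀ m, TensorProduct.rid R M (lTensor M counit (ρ m)) = m)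
    (f : M →ₗ[R] C) (hf : ∀ m, comul (f m) = lTensor C f (lam m) + rTensor C f (ρ m)) (m : M) :
    counit (R := R) (f m) = 0 := by
  let φ : C ⊗[R] C →ₗ[R] R := counit ∘ₗ (TensorProduct.lid R C).toLinearMap ∘ₗ rTensor C counit
  have hφ (c : C) : φ (comul c) = counit c := by simp [φ, rTensor_counit_comul]
  have hleft (t : C ⊗[R] M) :
      φ (lTensor C f t) = counit (f (TensorProduct.lid R M (rTensor M counit t))) := by
    induction t using TensorProduct.induction_on with
    | zero => simp
    | tmul c n => simp [φ]
    | add s t hs ht => simp_all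
  have hright (t : M ⊗[R] C) :
      φ (rTensor C f t) = counit (f (TensorProduct.rid R M (lTensor M counit t))) := by
    induction t using TensorProduct.induction_on with
    | zero => simp
    | tmul n c => simp [φ, mul_comm]
    | add s t hs ht => simp_all
  have h := congr(φ $(hf m))
  rw [map_add, hφ, hleft, hright, hl_counit, hr_counit] at h
  exact left_eq_add.mp h

end Coderivation

theorem stmt12_general (k H M : Type) [Field k] [Ring H] [HopfAlgebra k H]
    [AddCommGroup M] [Module k M]
    (lact : H ⊗[k] M →ₗ[k] M) (ract : M ⊗[k] H →ₗ[k] M)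
    (lam : M →ₗ[k] H ⊗[k] M) (ρ : M →ₗ[k] M ⊗[k] H)
    -- M is an H-bicomodule
    (hl_counit : ∀ m : M,
      (TensorProduct.lid k M) ((rTensor M (Coalgebra.counit (R := k))) (lam m)) = m)
    (hr_counit : ∀ m : M,
      (TensorProduct.rid k M) ((lTensor M (Coalgebra.counit (R := k))) (ρ m)) = m)
    -- the coactions are bimodule maps (M is a tetramodule)
    (hcl_l : lam ∘ₗ lact = diagLHM k H M lact ∘ₗ lTensor H lam)
    (hcl_r : lam ∘ₗ ract = diagRHM k H M ract ∘ₗ rTensor H lam)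
    -- f is an H-bimodule map and a coderivation
    (f : M →ₗ[k] H)
    (h_fl : ∀ (a : H) (m : M), f (lact (a ⊗ₜ m)) = a * f m)
    (h_fr : ∀ (m : M) (a : H), f (ract (m ⊗ₜ a)) = f m * a)
    (hf : ∀ m : M,
      Coalgebra.comul (R := k) (f m) = (lTensor H f) (lam m) + (rTensor H f) (ρ m)) :
    -- f̃ takes values in ker ε
    (∀ m : M, lam m = (1 : H) ⊗ₜ[k] m → Coalgebra.counit (R := k) (f m) = 0) ∧
    -- the adjoint action preserves the left-invariants
    (∀ (m : M) (h : H), lam m = (1 : H) ⊗ₜ[k] m →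
      lam (adActM k H M lact ract (m ⊗ₜ h))
        = (1 : H) ⊗ₜ[k] adActM k H M lact ract (m ⊗ₜ h)) ∧
    -- f̃ is equivariant for the right adjoint actions
    (∀ (m : M) (h : H), lam m = (1 : H) ⊗ₜ[k] m →
      f (adActM k H M lact ract (m ⊗ₜ h)) = adActH k H (f m ⊗ₜ h)) ∧
    -- f̃ is right H-colinear
    (∀ m : M, lam m = (1 : H) ⊗ₜ[k] m →
      Coalgebra.comul (R := k) (f m) - (1 : H) ⊗ₜ[k] f m = (rTensor H f) (ρ m)) := by
  refine ⟨fun m _ ↦ counit_apply_eq_zero_of_coderivation lam ρ hl_counit hr_counit f hf m,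
    fun m h hm ↦ lam_adActM_of_lam_eq lam hcl_l hcl_r m hm h,
    fun m h _ ↦ apply_adActM lact ract f h_fl h_fr m h, fun m hm ↦ ?_⟩
  rw [hf m, hm, lTensor_tmul, add_sub_cancel_left]

/-- Let `H` be a Hopf algebra, `M` an `H`-tetramodule and `f : M → H`
an `H`-bimodule map which is a coderivation.  Then the restriction of `f` to the
left-invariants `ⁱⁿᵛM = {m : m₍₋₁₎ ⊗ m₍₀₎ = 1 ⊗ m}` takes values in `ker ε`, is
equivariant for the right adjoint actions, and is right `H`-colinear; together this
makes `f̃ : ⁱⁿᵛM → ker ε` a morphism of Yetter–Drinfel'd modules over `H`. -/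
theorem stmt12 (k H M : Type) [Field k] [Ring H] [HopfAlgebra k H]
    [AddCommGroup M] [Module k M]
    (lact : H ⊗[k] M →ₗ[k] M) (ract : M ⊗[k] H →ₗ[k] M)
    (lam : M →ₗ[k] H ⊗[k] M) (ρ : M →ₗ[k] M ⊗[k] H)
    -- M is an H-bimodule
    (h_lact_one : ∀ m : M, lact ((1 : H) ⊗ₜ m) = m)
    (h_lact_mul : ∀ (a b : H) (m : M), lact (a ⊗ₜ lact (b ⊗ₜ m)) = lact ((a * b) ⊗ₜ m))
    (h_ract_one : ∀ m : M, ract (m ⊗ₜ (1 : H)) = m)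
    (h_ract_mul : ∀ (m : M) (a b : H), ract (ract (m ⊗ₜ a) ⊗ₜ b) = ract (m ⊗ₜ (a * b)))
    (h_commute : ∀ (a : H) (m : M) (b : H),
      ract (lact (a ⊗ₜ m) ⊗ₜ b) = lact (a ⊗ₜ ract (m ⊗ₜ b)))
    -- M is an H-bicomodule
    (hl_counit : ∀ m : M,
      (TensorProduct.lid k M) ((rTensor M (Coalgebra.counit (R := k))) (lam m)) = m)
    (hl_coassoc : ∀ m : M,
      (TensorProduct.assoc k H H M) ((rTensor M (Coalgebra.comul (R := k))) (lam m))
        = (lTensor H lam) (lam m))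
    (hr_counit : ∀ m : M,
      (TensorProduct.rid k M) ((lTensor M (Coalgebra.counit (R := k))) (ρ m)) = m)
    (hr_coassoc : ∀ m : M,
      (TensorProduct.assoc k M H H) ((rTensor H ρ) (ρ m))
        = (lTensor M (Coalgebra.comul (R := k))) (ρ m))
    (hbicompat : ∀ m : M,
      (TensorProduct.assoc k H M H) ((rTensor H lam) (ρ m)) = (lTensor H ρ) (lam m))
    -- the coactions are bimodule maps (M is a tetramodule)
    (hcl_l : lam ∘ₗ lact = diagLHM k H M lact ∘ₗ lTensor H lam)
    (hcl_r : lam ∘ₗ ract = diagRHM k H M ract ∘ₗ rTensor H lam)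
    (hcr_l : ρ ∘ₗ lact = diagLMH k H M lact ∘ₗ lTensor H ρ)
    (hcr_r : ρ ∘ₗ ract = diagRMH k H M ract ∘ₗ rTensor H ρ)
    -- f is an H-bimodule map and a coderivation
    (f : M →ₗ[k] H)
    (h_fl : ∀ (a : H) (m : M), f (lact (a ⊗ₜ m)) = a * f m)
    (h_fr : ∀ (m : M) (a : H), f (ract (m ⊗ₜ a)) = f m * a)
    (hf : ∀ m : M,
      Coalgebra.comul (R := k) (f m) = (lTensor H f) (lam m) + (rTensor H f) (ρ m)) :
    -- f̃ takes values in ker ε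
    (∀ m : M, lam m = (1 : H) ⊗ₜ[k] m → Coalgebra.counit (R := k) (f m) = 0) ∧
    -- the adjoint action preserves the left-invariants
    (∀ (m : M) (h : H), lam m = (1 : H) ⊗ₜ[k] m →
      lam (adActM k H M lact ract (m ⊗ₜ h))
        = (1 : H) ⊗ₜ[k] adActM k H M lact ract (m ⊗ₜ h)) ∧
    -- f̃ is equivariant for the right adjoint actions
    (∀ (m : M) (h : H), lam m = (1 : H) ⊗ₜ[k] m →
      f (adActM k H M lact ract (m ⊗ₜ h)) = adActH k H (f m ⊗ₜ h)) ∧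
    -- f̃ is right H-colinear
    (∀ m : M, lam m = (1 : H) ⊗ₜ[k] m →
      Coalgebra.comul (R := k) (f m) - (1 : H) ⊗ₜ[k] f m = (rTensor H f) (ρ m)) :=
  stmt12_general k H M lact ract lam ρ hl_counit hr_counit hcl_l hcl_r f h_fl h_fr hf
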